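/- Let α* be the minimizer of α ↦ (1/2)‖α − μ‖² + ρ·TopSum_k(H_M(α)), where H_M is applied coordinatewise. Then for any indices j, l with |μ_j| ≥ |μ_l|, it holds that |α*_j| ≥ |α*_l| (the proximal operator preserves relative magnitudes). -/

import Mathlib

open Finset

/-- The Huber function with threshold `M`. -/
noncomputable def huber (M α : ℝ) : ℝ :=
  if |α| ≤ M then α ^ 2 / 2 else M * |α| - M ^ 2 / 2

/-- Sum of the `k` largest components of `c`. -/
noncomputable def topSum {p : ℕ} (k : ℕ) (c : Fin p → ℝ) : ℝ :=
  sSup {x : ℝ | ∃ s : Finset (Fin p), s.card = k ∧ x = ∑ j ∈ s, c j}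

section helpers

variable {p k : ℕ}

lemma topSum_set_finite (c : Fin p → ℝ) :
    {x : ℝ | ∃ s : Finset (Fin p), s.card = k ∧ x = ∑ j ∈ s, c j}.Finite := by
  have hsub : {x : ℝ | ∃ s : Finset (Fin p), s.card = k ∧ x = ∑ j ∈ s, c j}
      ⊆ (fun s : Finset (Fin p) => ∑ j ∈ s, c j) '' Set.univ := by
    rintro x ⟨s, _, rfl⟩; exact ⟨s, trivial, rfl⟩
  exact (Set.finite_univ.image _).subset hsub

lemma exists_card_eq (hkp : k ≤ p) : ∃ s : Finset (Fin p), s.card = k := by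
  obtain ⟨t, _, ht⟩ := Finset.exists_subset_card_eq (s := (univ : Finset (Fin p))) (n := k)
    (by simpa using hkp)
  exact ⟨t, ht⟩

lemma le_topSum (c : Fin p → ℝ) {s : Finset (Fin p)} (hs : s.card = k) :
    ∑ j ∈ s, c j ≤ topSum k c :=
  le_csSup (topSum_set_finite c).bddAbove ⟨s, hs, rfl⟩

lemma topSum_le (hkp : k ≤ p) (c : Fin p → ℝ) {B : ℝ}
    (h : ∀ s : Finset (Fin p), s.card = k → ∑ j ∈ s, c j ≤ B) : topSum k c ≤ B := by
  obtain ⟨s, hs⟩ := exists_card_eq hkp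
  refine csSup_le ⟨_, s, hs, rfl⟩ ?_
  rintro x ⟨t, ht, rfl⟩
  exact h t ht

lemma topSum_mono (hkp : k ≤ p) {c d : Fin p → ℝ} (h : ∀ i, c i ≤ d i) :
    topSum k c ≤ topSum k d :=
  topSum_le hkp c fun s hs =>
    le_trans (Finset.sum_le_sum fun i _ => h i) (le_topSum d hs)

lemma topSum_comp_perm_le (hkp : k ≤ p) (c : Fin p → ℝ) (σ : Equiv.Perm (Fin p)) :
    topSum k (fun i => c (σ i)) ≤ topSum k c := by
  refine topSum_le hkp _ fun s hs => ?_
  have h1 : ∑ i ∈ s, c (σ i) = ∑ i ∈ s.image σ, c i :=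
    (Finset.sum_image (fun a _ b _ h => σ.injective h)).symm
  rw [h1]
  exact le_topSum c (by rw [Finset.card_image_of_injective _ σ.injective, hs])

lemma topSum_comp_perm (hkp : k ≤ p) (c : Fin p → ℝ) (σ : Equiv.Perm (Fin p)) :
    topSum k (fun i => c (σ i)) = topSum k c := by
  refine le_antisymm (topSum_comp_perm_le hkp c σ) ?_
  have h := topSum_comp_perm_le hkp (fun i => c (σ i)) σ.symm
  simpa [Equiv.apply_symm_apply] using h

lemma topSum_half (hkp : k ≤ p) {c d e : Fin p → ℝ} (h : ∀ i, e i ≤ (c i + d i) / 2) :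
    topSum k e ≤ (topSum k c + topSum k d) / 2 := by
  refine topSum_le hkp _ fun s hs => ?_
  have h1 : ∑ i ∈ s, e i ≤ ∑ i ∈ s, (c i + d i) / 2 :=
    Finset.sum_le_sum fun i _ => h i
  have h2 : ∑ i ∈ s, (c i + d i) / 2 = (∑ i ∈ s, c i + ∑ i ∈ s, d i) / 2 := by
    rw [← Finset.sum_add_distrib, Finset.sum_div]
  have h3 := le_topSum c hs
  have h4 := le_topSum d hs
  linarith

lemma huber_nonneg (M x : ℝ) (hM : 0 < M) : 0 ≤ huber M x := by
  unfold huber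
  split_ifs with h
  · positivity
  · push_neg at h
    nlinarith [abs_nonneg x]

lemma huber_zero (M : ℝ) (hM : 0 < M) : huber M 0 = 0 := by
  simp [huber, hM.le]

lemma huber_abs_eq {a b : ℝ} (M : ℝ) (h : |a| = |b|) : huber M a = huber M b := by
  unfold huber
  rw [← sq_abs a, ← sq_abs b, h]

lemma huber_midpoint {a b M : ℝ} (hM : 0 < M) (ha : 0 ≤ a) (hb : 0 ≤ b) :
    huber M ((a + b) / 2) ≤ (huber M a + huber M b) / 2 := by
  have hab : 0 ≤ (a + b) / 2 := by linarith
  unfold huber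
  rw [abs_of_nonneg ha, abs_of_nonneg hb, abs_of_nonneg hab]
  split_ifs with h1 h2 h3 h2 h3 h3' <;>
    nlinarith [sq_nonneg (a - b), sq_nonneg (a - M), sq_nonneg (b - M), sq_nonneg (a + b - 2*M)]

lemma sum_diff1 {p : ℕ} (l : Fin p) (f g : Fin p → ℝ)
    (h : ∀ i, i ≠ l → f i = g i) :
    ∑ i, f i - ∑ i, g i = f l - g l := by
  rw [← Finset.add_sum_erase _ f (mem_univ l), ← Finset.add_sum_erase _ g (mem_univ l)]
  have he : ∑ i ∈ univ.erase l, f i = ∑ i ∈ univ.erase l, g i :=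
    Finset.sum_congr rfl fun i hi => h i (Finset.mem_erase.mp hi).1
  rw [he]; ring

lemma sum_diff2 {p : ℕ} {j l : Fin p} (hjl : j ≠ l) (f g : Fin p → ℝ)
    (h : ∀ i, i ≠ j → i ≠ l → f i = g i) :
    ∑ i, f i - ∑ i, g i = f j + f l - (g j + g l) := by
  have hl : l ∈ univ.erase j := Finset.mem_erase.mpr ⟨Ne.symm hjl, mem_univ l⟩
  rw [← Finset.add_sum_erase _ f (mem_univ j), ← Finset.add_sum_erase _ f hl,
      ← Finset.add_sum_erase _ g (mem_univ j), ← Finset.add_sum_erase _ g hl]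
  have he : ∑ i ∈ (univ.erase j).erase l, f i = ∑ i ∈ (univ.erase j).erase l, g i := by
    refine Finset.sum_congr rfl fun i hi => ?_
    have h1 := Finset.mem_erase.mp hi
    have h2 := Finset.mem_erase.mp h1.2
    exact h i h2.1 h1.1
  rw [he]; ring

end helpers

set_option maxHeartbeats 1000000 in
/-- Magnitude-ordering property of the prox: if `α*` minimizes
`α ↦ (1/2)‖α − μ‖² + ρ·TopSum_k(H_M(α))` then `|μⱼ| ≥ |μₗ|` implies
`|α*ⱼ| ≥ |α*ₗ|`. -/
theorem prox_magnitude_ordering {p k : ℕ} (hk1 : 1 ≤ k) (hkp : k ≤ p)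
    (M ρ : ℝ) (hM : 0 < M) (hρ : 0 < ρ) (μ αstar : Fin p → ℝ)
    (hmin : ∀ α : Fin p → ℝ,
      (1 / 2) * (∑ j, (αstar j - μ j) ^ 2) + ρ * topSum k (fun j => huber M (αstar j))
        ≤ (1 / 2) * (∑ j, (α j - μ j) ^ 2) + ρ * topSum k (fun j => huber M (α j))) :
    ∀ j l : Fin p, |μ l| ≤ |μ j| → |αstar l| ≤ |αstar j| := by
  intro j l hmu
  rcases eq_or_ne j l with hjl | hjl
  · subst hjl; exact le_refl _
  by_cases hmul : μ l = 0
  · -- zero out coordinate l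
    set α' := Function.update αstar l 0 with hα'
    have hα'l : α' l = 0 := Function.update_self _ _ _
    have hα'i : ∀ i, i ≠ l → α' i = αstar i := fun i hi => Function.update_of_ne hi _ _
    have hpen : topSum k (fun i => huber M (α' i)) ≤ topSum k (fun i => huber M (αstar i)) := by
      refine topSum_mono hkp fun i => ?_
      by_cases hi : i = l
      · subst hi; rw [hα'l, huber_zero M hM]; exact huber_nonneg M _ hM
      · rw [hα'i i hi]
    have hq := sum_diff1 l (fun i => (α' i - μ i) ^ 2) (fun i => (αstar i - μ i) ^ 2)
      (fun i hi => by simp only [hα'i i hi])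
    simp only [hα'l, hmul] at hq
    have hmin' := hmin α'
    have hpen' : ρ * topSum k (fun i => huber M (α' i))
        ≤ ρ * topSum k (fun i => huber M (αstar i)) :=
      mul_le_mul_of_nonneg_left hpen hρ.le
    have hl0 : αstar l = 0 := by nlinarith [sq_nonneg (αstar l)]
    simp only [hl0, abs_zero]
    exact abs_nonneg _
  · -- main case
    have hmlpos : 0 < |μ l| := abs_pos.mpr hmul
    by_contra hcon
    push_neg at hcon
    set A := |αstar j| with hAdef
    set B := |αstar l| with hBdef
    set mj := |μ j| with hmjdef
    set ml := |μ l| with hmldef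
    have hA0 : 0 ≤ A := abs_nonneg _
    have hB0 : 0 ≤ B := abs_nonneg _
    set sj : ℝ := if μ j < 0 then -1 else 1 with hsjdef
    set sl : ℝ := if μ l < 0 then -1 else 1 with hsldef
    have hsjμ : sj * μ j = mj := by
      rw [hsjdef, hmjdef]; split_ifs with h
      · rw [abs_of_neg h]; ring
      · rw [abs_of_nonneg (not_lt.mp h)]; ring
    have hslμ : sl * μ l = ml := by
      rw [hsldef, hmldef]; split_ifs with h
      · rw [abs_of_neg h]; ring
      · rw [abs_of_nonneg (not_lt.mp h)]; ring
    have hsj2 : sj ^ 2 = 1 := by rw [hsjdef]; split_ifs <;> norm_num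
    have hsl2 : sl ^ 2 = 1 := by rw [hsldef]; split_ifs <;> norm_num
    have habsj : ∀ t : ℝ, |sj * t| = |t| := by
      intro t; rw [abs_mul, hsjdef]; split_ifs <;> simp
    have habsl : ∀ t : ℝ, |sl * t| = |t| := by
      intro t; rw [abs_mul, hsldef]; split_ifs <;> simp
    have hAsq : (αstar j) ^ 2 = A ^ 2 := (sq_abs _).symm
    have hBsq : (αstar l) ^ 2 = B ^ 2 := (sq_abs _).symm
    have e1 : αstar j * μ j ≤ A * mj := by
      calc αstar j * μ j ≤ |αstar j * μ j| := le_abs_self _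
        _ = A * mj := abs_mul _ _
    have e2 : αstar l * μ l ≤ B * ml := by
      calc αstar l * μ l ≤ |αstar l * μ l| := le_abs_self _
        _ = B * ml := abs_mul _ _
    -- the swapped point
    set α' := Function.update (Function.update αstar j (sj * B)) l (sl * A) with hα'def
    have hα'j : α' j = sj * B := by
      rw [hα'def, Function.update_of_ne hjl, Function.update_self]
    have hα'l : α' l = sl * A := Function.update_self _ _ _
    have hα'i : ∀ i, i ≠ j → i ≠ l → α' i = αstar i := fun i h1 h2 => by
      rw [hα'def, Function.update_of_ne h2, Function.update_of_ne h1]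
    have hpen : topSum k (fun i => huber M (α' i)) = topSum k (fun i => huber M (αstar i)) := by
      have hfe : (fun i => huber M (α' i))
          = fun i => huber M (αstar (Equiv.swap j l i)) := by
        funext i
        by_cases h1 : i = j
        · subst h1; rw [hα'j, Equiv.swap_apply_left]
          exact huber_abs_eq M (by rw [habsj, abs_abs])
        by_cases h2 : i = l
        · subst h2; rw [hα'l, Equiv.swap_apply_right]
          exact huber_abs_eq M (by rw [habsl, abs_abs])
        · rw [hα'i i h1 h2, Equiv.swap_apply_of_ne_of_ne h1 h2]
      rw [hfe]
      exact topSum_comp_perm hkp (fun i => huber M (αstar i)) (Equiv.swap j l)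
    have hq : (∑ i, (α' i - μ i) ^ 2) - ∑ i, (αstar i - μ i) ^ 2
        = (α' j - μ j) ^ 2 + (α' l - μ l) ^ 2
          - ((αstar j - μ j) ^ 2 + (αstar l - μ l) ^ 2) :=
      sum_diff2 hjl _ _ (fun i h1 h2 => by simp only [hα'i i h1 h2])
    have hQle : ∑ i, (αstar i - μ i) ^ 2 ≤ ∑ i, (α' i - μ i) ^ 2 := by
      have hmin' := hmin α'
      rw [hpen] at hmin'
      linarith
    have hexp : (α' j - μ j) ^ 2 + (α' l - μ l) ^ 2
        - ((αstar j - μ j) ^ 2 + (αstar l - μ l) ^ 2)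
        = 2 * (αstar j * μ j + αstar l * μ l - B * mj - A * ml) := by
      rw [hα'j, hα'l]
      linear_combination B ^ 2 * hsj2 + A ^ 2 * hsl2 - 2 * B * hsjμ - 2 * A * hslμ
        - hAsq - hBsq
    have hX : B * mj + A * ml - (αstar j * μ j + αstar l * μ l) ≤ 0 := by
      linarith [hQle, hq, hexp]
    have h5 : (B - A) * (mj - ml) ≤ 0 := by nlinarith [e1, e2, hX]
    have h6 : 0 ≤ (B - A) * (mj - ml) :=
      mul_nonneg (by linarith) (by linarith)
    have h7 : mj = ml := by
      rcases mul_eq_zero.mp (le_antisymm h5 h6) with h | h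
      · exfalso; linarith
      · linarith
    rw [h7] at hX e1
    have hpj : αstar j * μ j = A * ml := by linarith
    have hpl : αstar l * μ l = B * ml := by linarith
    -- the midpoint point
    set v : ℝ := (A + B) / 2 with hvdef
    have hv0 : 0 ≤ v := by rw [hvdef]; linarith
    set αm := Function.update (Function.update αstar j (sj * v)) l (sl * v) with hαmdef
    have hαmj : αm j = sj * v := by
      rw [hαmdef, Function.update_of_ne hjl, Function.update_self]
    have hαml : αm l = sl * v := Function.update_self _ _ _
    have hαmi : ∀ i, i ≠ j → i ≠ l → αm i = αstar i := fun i h1 h2 => by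
      rw [hαmdef, Function.update_of_ne h2, Function.update_of_ne h1]
    have hpm : topSum k (fun i => huber M (αm i)) ≤ topSum k (fun i => huber M (αstar i)) := by
      have hvmid : huber M v ≤ (huber M A + huber M B) / 2 := by
        rw [hvdef]; exact huber_midpoint hM hA0 hB0
      have hj' : huber M (αstar j) = huber M A := huber_abs_eq M (abs_abs _).symm
      have hl' : huber M (αstar l) = huber M B := huber_abs_eq M (abs_abs _).symm
      have hhalf : ∀ i, huber M (αm i)
          ≤ ((fun i => huber M (αstar i)) i
            + (fun i => huber M (αstar (Equiv.swap j l i))) i) / 2 := by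
        intro i
        by_cases h1 : i = j
        · simp only [h1, Equiv.swap_apply_left]
          rw [hαmj]
          have hv : huber M (sj * v) = huber M v := huber_abs_eq M (habsj v)
          rw [hv, hj', hl']
          exact hvmid
        by_cases h2 : i = l
        · simp only [h2, Equiv.swap_apply_right]
          rw [hαml]
          have hv : huber M (sl * v) = huber M v := huber_abs_eq M (habsl v)
          rw [hv, hj', hl']
          linarith [hvmid]
        · simp only [Equiv.swap_apply_of_ne_of_ne h1 h2, hαmi i h1 h2]
          linarith [le_refl (huber M (αstar i))]
      have hperm : topSum k (fun i => huber M (αstar (Equiv.swap j l i)))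
          = topSum k (fun i => huber M (αstar i)) :=
        topSum_comp_perm hkp (fun i => huber M (αstar i)) (Equiv.swap j l)
      calc topSum k (fun i => huber M (αm i))
          ≤ (topSum k (fun i => huber M (αstar i))
            + topSum k (fun i => huber M (αstar (Equiv.swap j l i)))) / 2 :=
            topSum_half hkp hhalf
        _ = topSum k (fun i => huber M (αstar i)) := by rw [hperm]; ring
    have hqm : (∑ i, (αm i - μ i) ^ 2) - ∑ i, (αstar i - μ i) ^ 2
        = (αm j - μ j) ^ 2 + (αm l - μ l) ^ 2
          - ((αstar j - μ j) ^ 2 + (αstar l - μ l) ^ 2) :=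
      sum_diff2 hjl _ _ (fun i h1 h2 => by simp only [hαmi i h1 h2])
    have hexp2 : (αm j - μ j) ^ 2 + (αm l - μ l) ^ 2
        - ((αstar j - μ j) ^ 2 + (αstar l - μ l) ^ 2) = -(A - B) ^ 2 / 2 := by
      rw [hαmj, hαml, hvdef]
      linear_combination ((A + B) / 2) ^ 2 * hsj2 + ((A + B) / 2) ^ 2 * hsl2
        - (A + B) * hsjμ - (A + B) * hslμ - hAsq - hBsq + 2 * hpj + 2 * hpl
        - (A + B) * h7
    have hQm : ∑ i, (αstar i - μ i) ^ 2 ≤ ∑ i, (αm i - μ i) ^ 2 := by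
      have hmin' := hmin αm
      have hpm' : ρ * topSum k (fun i => huber M (αm i))
          ≤ ρ * topSum k (fun i => huber M (αstar i)) :=
        mul_le_mul_of_nonneg_left hpm hρ.le
      linarith
    have h8 : (0:ℝ) ≤ -(A - B) ^ 2 / 2 := by linarith only [hQm, hqm, hexp2]
    have h9 : 0 < (A - B) ^ 2 := by
      have hBA : 0 < B - A := by linarith only [hcon]
      calc (0:ℝ) < (B - A) * (B - A) := mul_pos hBA hBA
        _ = (A - B) ^ 2 := by ring
    linarith only [h8, h9]
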